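/- For integers d ≥ 1 and 0 ≤ r ≤ d, the minimum size of a percolating set in the r-edge bootstrap percolation on the hypercube Q_d = K_2^d is m_e(K_2^d, r) = ∑_{i=0}^{r} (r − i)·C(d, i). -/

import Mathlib

/-!
The upper bound is by induction on `d`: `Q (d + 1)` is two copies of `Q d` joined by a perfect
matching. Percolate the copy with last coordinate `0` at threshold `r` and the other copy at
threshold `r - 1`. Once the first copy is active, every matching edge sees `d ≥ r` active edges;
after that every vertex of the second copy has one extra active edge, so threshold `r - 1`
suffices there. The sizes add up by Pascal's rule.

The lower bound is the polynomial method. Label the edges by vectors so that at every vertex `x`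
the label of the edge in direction `i` is `P_x(i)` for a vector-valued polynomial `P_x` of degree
`< r`. Any `r` labels at a vertex determine `P_x` (Vandermonde), hence all labels there, so the
span of the labels of the active edges never grows, and a percolating set has at least as many
edges as the dimension of the span of all labels. Labellings of the right dimension are built by
the same recursion: the labelling for `(d, r)` is pulled back to both copies and, in a second
component, `(X - d)` times a labelling for `(d, r - 1)` is added on the copy with last coordinate
`1`; this vanishes at the node `d` of the matching edges.
-/

/-- One round of the `r`-edge bootstrap percolation process on `G`: an inactive edge
becomes active if one of its endpoints is incident to at least `r` active edges. -/
def edgeStep {V : Type*} (G : SimpleGraph V) (r : ℕ) (A : Set (Sym2 V)) : Set (Sym2 V) :=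
  A ∪ {e | e ∈ G.edgeSet ∧ ∃ v ∈ e, r ≤ {f | f ∈ G.edgeSet ∧ v ∈ f ∧ f ∈ A}.ncard}

/-- A set `A` of edges of `G` percolates in the `r`-edge bootstrap percolation process
if iterating the activation rule eventually activates every edge of `G`. -/
def EdgePercolates {V : Type*} (G : SimpleGraph V) (r : ℕ) (A : Set (Sym2 V)) : Prop :=
  A ⊆ G.edgeSet ∧ ∃ k, (edgeStep G r)^[k] A = G.edgeSet

/-- `me G r` is the minimum size of a percolating set in the `r`-edge bootstrap
percolation process on `G`. -/
noncomputable def me {V : Type*} (G : SimpleGraph V) (r : ℕ) : ℕ :=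
  sInf {k | ∃ A, EdgePercolates G r A ∧ A.ncard = k}

/-- The Hamming graph `K_n^d`: vertices are `d`-tuples over `{0, …, n−1}`, with two
tuples adjacent if and only if they differ in exactly one coordinate. -/
def hammingGraph (n d : ℕ) : SimpleGraph (Fin d → Fin n) where
  Adj x y := ∃! i, x i ≠ y i
  symm := by
    refine ⟨?_⟩
    rintro x y ⟨i, hi, hu⟩
    exact ⟨i, hi.symm, fun j hj => hu j hj.symm⟩
  loopless := by
    refine ⟨?_⟩
    rintro x ⟨i, hi, -⟩
    exact hi rfl

open Module Submodule

section EdgeBootstrap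

variable {V W : Type*} {G : SimpleGraph V} {H : SimpleGraph W} {r : ℕ} {A : Set (Sym2 V)}

lemma mem_edgeStep {e : Sym2 V} :
    e ∈ edgeStep G r A ↔
      e ∈ A ∨ e ∈ G.edgeSet ∧ ∃ v ∈ e, r ≤ (G.incidenceSet v ∩ A).ncard := by
  simp only [edgeStep, SimpleGraph.incidenceSet, Set.mem_union, Set.mem_ofPred_eq,
    Set.inter_def, and_assoc]

lemma subset_edgeStep (A : Set (Sym2 V)) : A ⊆ edgeStep G r A := Set.subset_union_left

lemma edgeStep_monotone [Finite V] : Monotone (edgeStep G r) := by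
  intro A B hAB e he
  rw [mem_edgeStep] at he ⊢
  rcases he with he | ⟨he, v, hv, hr⟩
  · exact .inl (hAB he)
  · exact .inr ⟨he, v, hv, hr.trans (Set.ncard_le_ncard (by gcongr) (Set.toFinite _))⟩

lemma monotone_iterate_edgeStep_apply [Finite V] (A : Set (Sym2 V)) :
    Monotone fun k => (edgeStep G r)^[k] A :=
  edgeStep_monotone.monotone_iterate_of_le_map (subset_edgeStep A)

lemma iterate_edgeStep_subset_edgeSet (hA : A ⊆ G.edgeSet) (k : ℕ) :
    (edgeStep G r)^[k] A ⊆ G.edgeSet := by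
  induction k with
  | zero => exact hA
  | succ k ih =>
    rw [Function.iterate_succ_apply']
    exact Set.union_subset ih fun _ he => he.1

lemma edgePercolates_iff (hA : A ⊆ G.edgeSet) :
    EdgePercolates G r A ↔ ∃ k, G.edgeSet ⊆ (edgeStep G r)^[k] A :=
  ⟨fun ⟨_, k, hk⟩ => ⟨k, hk.ge⟩,
    fun ⟨k, hk⟩ => ⟨hA, k, (iterate_edgeStep_subset_edgeSet hA k).antisymm hk⟩⟩

lemma edgePercolates_edgeSet : EdgePercolates G r G.edgeSet :=
  ⟨subset_rfl, 0, rfl⟩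

lemma edgePercolates_empty_zero : EdgePercolates G 0 ∅ :=
  (edgePercolates_iff (Set.empty_subset _)).2
    ⟨1, fun e he => Set.mem_union_right _ ⟨he, _, Sym2.out_fst_mem e, Nat.zero_le _⟩⟩

lemma image_edgeStep_subset [Finite W] (f : G →g H) (hf : Function.Injective f)
    {M : Set (Sym2 W)} {c : ℕ}
    (hM : ∀ v, c ≤ ((H.incidenceSet (f v) ∩ M) \ Set.range (Sym2.map f)).ncard)
    (A : Set (Sym2 V)) :
    Sym2.map f '' edgeStep G r A ⊆ edgeStep H (r + c) (Sym2.map f '' A ∪ M) := by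
  rintro - ⟨e, he, rfl⟩
  rw [mem_edgeStep] at he ⊢
  rcases he with he | ⟨he, v, hv, hr⟩
  · exact .inl (.inl ⟨e, he, rfl⟩)
  refine .inr ⟨f.mapEdgeSet ⟨e, he⟩ |>.2, f v, Sym2.mem_map.2 ⟨v, hv, rfl⟩, ?_⟩
  have hinj : Function.Injective (Sym2.map f) := Sym2.map.injective hf
  have hdisj : Disjoint (Sym2.map f '' (G.incidenceSet v ∩ A))
      ((H.incidenceSet (f v) ∩ M) \ Set.range (Sym2.map f)) :=
    Set.disjoint_left.2 fun _ ⟨e', _, he'⟩ h => h.2 ⟨e', he'⟩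
  have hsub : Sym2.map f '' (G.incidenceSet v ∩ A) ∪
      ((H.incidenceSet (f v) ∩ M) \ Set.range (Sym2.map f)) ⊆
      H.incidenceSet (f v) ∩ (Sym2.map f '' A ∪ M) := by
    rintro _ (⟨e', ⟨⟨he'G, hve'⟩, he'A⟩, rfl⟩ | ⟨⟨hinc, hm⟩, -⟩)
    · exact ⟨⟨f.mapEdgeSet ⟨e', he'G⟩ |>.2, Sym2.mem_map.2 ⟨v, hve', rfl⟩⟩,
        .inl ⟨e', he'A, rfl⟩⟩
    · exact ⟨hinc, .inr hm⟩
  calc r + c ≤ (Sym2.map f '' (G.incidenceSet v ∩ A)).ncard +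
        ((H.incidenceSet (f v) ∩ M) \ Set.range (Sym2.map f)).ncard := by
        rw [Set.ncard_image_of_injective _ hinj]
        exact add_le_add hr (hM v)
    _ = _ := (Set.ncard_union_eq hdisj (Set.toFinite _) (Set.toFinite _)).symm
    _ ≤ _ := Set.ncard_le_ncard hsub (Set.toFinite _)

lemma image_iterate_edgeStep_subset [Finite W] (f : G →g H) (hf : Function.Injective f)
    {M : Set (Sym2 W)} {c : ℕ}
    (hM : ∀ v, c ≤ ((H.incidenceSet (f v) ∩ M) \ Set.range (Sym2.map f)).ncard)
    (A : Set (Sym2 V)) (k : ℕ) :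
    Sym2.map f '' (edgeStep G r)^[k] A ∪ M ⊆
      (edgeStep H (r + c))^[k] (Sym2.map f '' A ∪ M) :=
  edgeStep_monotone.le_iterate_comp_of_le
    (h := fun A => Sym2.map f '' A ∪ M)
    (fun B => Set.union_subset (image_edgeStep_subset f hf hM B)
      (Set.subset_union_right.trans (subset_edgeStep _))) k A

/-- The span of the labels of the active edges never grows during the process. -/
theorem finrank_span_image_edgeSet_le [Finite V] {K M : Type*} [DivisionRing K]
    [AddCommGroup M] [Module K M] (φ : Sym2 V → M)
    (hφ : ∀ v S, S ⊆ G.incidenceSet v → r ≤ S.ncard →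
      φ '' G.incidenceSet v ⊆ span K (φ '' S))
    (hA : EdgePercolates G r A) :
    finrank K (span K (φ '' G.edgeSet)) ≤ A.ncard := by
  have hstep : ∀ B, span K (φ '' edgeStep G r B) ≤ span K (φ '' B) := by
    refine fun B => span_le.2 ?_
    rintro - ⟨e, he, rfl⟩
    rcases mem_edgeStep.1 he with he | ⟨he, v, hv, hr⟩
    · exact subset_span ⟨e, he, rfl⟩
    · exact span_mono (Set.image_mono Set.inter_subset_right)
        (hφ v _ Set.inter_subset_left hr ⟨e, ⟨he, hv⟩, rfl⟩)
  have hiter : ∀ k, span K (φ '' (edgeStep G r)^[k] A) ≤ span K (φ '' A) := by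
    intro k
    induction k with
    | zero => exact le_rfl
    | succ k ih =>
      rw [Function.iterate_succ_apply']
      exact (hstep _).trans ih
  obtain ⟨-, k, hk⟩ := hA
  have : FiniteDimensional K (span K (φ '' A)) :=
    FiniteDimensional.span_of_finite K (A.toFinite.image φ)
  have : Fintype (φ '' A) := (A.toFinite.image φ).fintype
  calc finrank K (span K (φ '' G.edgeSet))
      ≤ finrank K (span K (φ '' A)) := Submodule.finrank_mono (hk ▸ hiter k)
    _ ≤ (φ '' A).toFinset.card := finrank_span_le_card _
    _ = (φ '' A).ncard := (Set.ncard_eq_toFinset_card' _).symm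
    _ ≤ A.ncard := Set.ncard_image_le A.toFinite

end EdgeBootstrap

section PolyEval

variable {K M : Type*} [Field K] [AddCommGroup M] [Module K M] {n : ℕ}

def polyEval (c : K) : (Fin n → M) →ₗ[K] M where
  toFun u := ∑ t : Fin n, c ^ (t : ℕ) • u t
  map_add' u v := by simp [smul_add, Finset.sum_add_distrib]
  map_smul' a u := by simp [Finset.smul_sum, smul_comm a]

lemma polyEval_apply (c : K) (u : Fin n → M) : polyEval c u = ∑ t : Fin n, c ^ (t : ℕ) • u t :=
  rfl

lemma polyEval_eq_sum_vandermonde (x : Fin n → K) (u : Fin n → M) (k : Fin n) :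
    polyEval (x k) u = ∑ s, Matrix.vandermonde x k s • u s :=
  rfl

lemma polyEval_prodMk {M' : Type*} [AddCommGroup M'] [Module K M'] (c : K) (u : Fin n → M)
    (v : Fin n → M') : polyEval c (fun t => (u t, v t)) = (polyEval c u, polyEval c v) := by
  ext <;> simp [polyEval_apply, Prod.fst_sum, Prod.snd_sum]

def mulXSubC (a : K) (u : Fin n → M) : Fin (n + 1) → M :=
  Fin.cons (α := fun _ => M) 0 u - a • Fin.snoc (α := fun _ => M) u 0

lemma polyEval_mulXSubC (a c : K) (u : Fin n → M) :
    polyEval c (mulXSubC a u) = (c - a) • polyEval c u := by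
  have hcons : polyEval c (Fin.cons (α := fun _ => M) 0 u) = c • polyEval c u := by
    simp [polyEval_apply, Fin.sum_univ_succ, pow_succ', mul_smul, Finset.smul_sum]
  have hsnoc : polyEval c (Fin.snoc (α := fun _ => M) u 0) = polyEval c u := by
    simp [polyEval_apply, Fin.sum_univ_castSucc]
  rw [mulXSubC, map_sub, map_smul, hcons, hsnoc, sub_smul]

lemma sum_smul_sum_smul_of_mul_eq_one {A B : Matrix (Fin n) (Fin n) K} (h : B * A = 1)
    (u : Fin n → M) (t : Fin n) : ∑ k, B t k • ∑ s, A k s • u s = u t := by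
  simp_rw [Finset.smul_sum, smul_smul]
  rw [Finset.sum_comm]
  simp_rw [← Finset.sum_smul, ← Matrix.mul_apply, h, Matrix.one_apply, ite_smul, one_smul,
    zero_smul, Finset.sum_ite_eq, Finset.mem_univ, if_true]

variable {x : Fin n → K} (hx : Function.Injective x)
include hx

lemma polyEval_mem_span_polyEval (u : Fin n → M) (c : K) :
    polyEval c u ∈ span K (Set.range fun k => polyEval (x k) u) := by
  have hdet : IsUnit (Matrix.vandermonde x).det :=
    isUnit_iff_ne_zero.2 (Matrix.det_vandermonde_ne_zero_iff.2 hx)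
  have coeff_mem : ∀ t, u t ∈ span K (Set.range fun k => polyEval (x k) u) := fun t => by
    rw [← sum_smul_sum_smul_of_mul_eq_one (Matrix.nonsing_inv_mul _ hdet) u t]
    exact sum_mem fun k _ => smul_mem _ _ (subset_span ⟨k, polyEval_eq_sum_vandermonde x u k⟩)
  rw [polyEval_apply]
  exact sum_mem fun t _ => smul_mem _ _ (coeff_mem t)

lemma exists_polyEval_eq (y : Fin n → M) : ∃ u : Fin n → M, ∀ k, polyEval (x k) u = y k := by
  have hdet : IsUnit (Matrix.vandermonde x).det :=
    isUnit_iff_ne_zero.2 (Matrix.det_vandermonde_ne_zero_iff.2 hx)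
  exact ⟨fun t => ∑ k, (Matrix.vandermonde x)⁻¹ t k • y k,
    fun k => (polyEval_eq_sum_vandermonde x _ k).trans
      (sum_smul_sum_smul_of_mul_eq_one (Matrix.mul_nonsing_inv _ hdet) y k)⟩

end PolyEval

lemma finrank_add_finrank_le_of_prod {K V₁ V₂ : Type*} [DivisionRing K] [AddCommGroup V₁]
    [Module K V₁] [AddCommGroup V₂] [Module K V₂] {S : Submodule K (V₁ × V₂)}
    [FiniteDimensional K S] {S₁ : Submodule K V₁} {S₂ : Submodule K V₂}
    (h₁ : S₁.map (LinearMap.inl K V₁ V₂) ≤ S) (h₂ : S₂ ≤ S.map (LinearMap.snd K V₁ V₂)) :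
    finrank K S₁ + finrank K S₂ ≤ finrank K S := by
  set f := (LinearMap.snd K V₁ V₂).comp S.subtype
  let g : S₁ →ₗ[K] S :=
    ((LinearMap.inl K V₁ V₂).comp S₁.subtype).codRestrict S fun v => h₁ ⟨v, v.2, rfl⟩
  have hg : Function.Injective g := fun v w h =>
    Subtype.ext (congrArg Prod.fst (congrArg Subtype.val h))
  have hrange : LinearMap.range f = S.map (LinearMap.snd K V₁ V₂) := by
    rw [LinearMap.range_comp, Submodule.range_subtype]
  have hker : LinearMap.range g ≤ LinearMap.ker f := by
    rintro _ ⟨v, rfl⟩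
    rfl
  rw [← f.finrank_range_add_finrank_ker, add_comm, ← LinearMap.finrank_range_of_inj hg]
  gcongr
  · exact Submodule.finrank_mono (hrange ▸ h₂)
  · exact Submodule.finrank_mono hker

namespace Hypercube

variable {d : ℕ}

def flipAt (i : Fin d) (x : Fin d → Fin 2) : Fin d → Fin 2 := Function.update x i (x i).rev

@[simp] lemma flipAt_apply_self (i : Fin d) (x : Fin d → Fin 2) : flipAt i x i = (x i).rev :=
  Function.update_self ..

lemma flipAt_apply_of_ne {i j : Fin d} (h : j ≠ i) (x : Fin d → Fin 2) : flipAt i x j = x j :=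
  Function.update_of_ne h ..

lemma rev_ne_self (a : Fin 2) : a.rev ≠ a := by revert a; decide

@[simp] lemma flipAt_flipAt (i : Fin d) (x : Fin d → Fin 2) : flipAt i (flipAt i x) = x := by
  simp [flipAt]

lemma flipAt_injective_left (x : Fin d → Fin 2) : Function.Injective (flipAt · x) := by
  intro i j h
  by_contra hij
  have : flipAt i x i = flipAt j x i := congrFun h i
  rw [flipAt_apply_self, flipAt_apply_of_ne hij] at this
  exact rev_ne_self _ this

lemma adj_iff {x y : Fin d → Fin 2} : (hammingGraph 2 d).Adj x y ↔ ∃ i, y = flipAt i x := by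
  have eq_rev : ∀ {a b : Fin 2}, a ≠ b → b = a.rev := by decide
  constructor
  · rintro ⟨i, hi, huniq⟩
    refine ⟨i, funext fun j => ?_⟩
    rcases eq_or_ne j i with rfl | hj
    · simpa using eq_rev hi
    · rw [flipAt_apply_of_ne hj]
      by_contra h
      exact hj (huniq j (Ne.symm h))
  · rintro ⟨i, rfl⟩
    refine ⟨i, by simpa using (rev_ne_self (x i)).symm, fun j hj => ?_⟩
    by_contra h
    exact hj (flipAt_apply_of_ne h x).symm

def edgeAt (x : Fin d → Fin 2) (i : Fin d) : Sym2 (Fin d → Fin 2) := s(x, flipAt i x)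

lemma edgeAt_mem_edgeSet (x : Fin d → Fin 2) (i : Fin d) :
    edgeAt x i ∈ (hammingGraph 2 d).edgeSet :=
  adj_iff.2 ⟨i, rfl⟩

@[simp] lemma edgeAt_flipAt (x : Fin d → Fin 2) (i : Fin d) :
    edgeAt (flipAt i x) i = edgeAt x i := by
  simp [edgeAt, Sym2.eq_swap]

lemma edgeAt_eq_edgeAt_iff {x y : Fin d → Fin 2} {i j : Fin d} :
    edgeAt x i = edgeAt y j ↔ i = j ∧ (y = x ∨ y = flipAt i x) := by
  constructor
  · intro h
    rcases Sym2.eq_iff.1 h with ⟨rfl, h⟩ | ⟨hx, hy⟩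
    · exact ⟨flipAt_injective_left x h, .inl rfl⟩
    · subst hy
      obtain rfl : i = j := flipAt_injective_left x (by simpa using (congrArg (flipAt j) hx).symm)
      exact ⟨rfl, .inr rfl⟩
  · rintro ⟨rfl, rfl | rfl⟩ <;> simp

lemma edgeAt_injective (x : Fin d → Fin 2) : Function.Injective (edgeAt x) :=
  fun _ _ h => (edgeAt_eq_edgeAt_iff.1 h).1

lemma edgeSet_eq_range : (hammingGraph 2 d).edgeSet = Set.range (Function.uncurry edgeAt) := by
  ext e
  refine Sym2.ind (fun x y => ⟨fun h => ?_, ?_⟩) e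
  · obtain ⟨i, rfl⟩ := adj_iff.1 ((SimpleGraph.mem_edgeSet _).1 h)
    exact ⟨(x, i), rfl⟩
  · rintro ⟨⟨x', i⟩, h⟩
    rw [← h]
    exact edgeAt_mem_edgeSet x' i

lemma incidenceSet_eq_range (x : Fin d → Fin 2) :
    (hammingGraph 2 d).incidenceSet x = Set.range (edgeAt x) := by
  ext e
  refine ⟨fun ⟨he, hx⟩ => ?_, ?_⟩
  · obtain ⟨⟨y, i⟩, rfl⟩ := edgeSet_eq_range.le he
    rcases Sym2.mem_iff.1 hx with rfl | rfl
    · exact ⟨i, rfl⟩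
    · exact ⟨i, by simp⟩
  · rintro ⟨i, rfl⟩
    exact ⟨edgeAt_mem_edgeSet x i, Sym2.mem_mk_left _ _⟩

lemma ncard_edgeSet : (hammingGraph 2 d).edgeSet.ncard = d * 2 ^ (d - 1) := by
  classical
  have hdeg : ∀ x, (hammingGraph 2 d).degree x = d := fun x => by
    rw [← SimpleGraph.card_incidenceSet_eq_degree, ← Nat.card_eq_fintype_card,
      incidenceSet_eq_range, Nat.card_range_of_injective (edgeAt_injective x), Nat.card_fin]
  have hsum := (hammingGraph 2 d).sum_degrees_eq_twice_card_edges
  simp only [hdeg, Finset.sum_const, Finset.card_univ, Fintype.card_fun, Fintype.card_fin,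
    smul_eq_mul] at hsum
  rw [← SimpleGraph.coe_edgeFinset, Set.ncard_coe_finset]
  rcases d with _ | d
  · simp_all
  · rw [pow_succ] at hsum
    simp only [Nat.add_sub_cancel]
    linarith

def percolationBound (d r : ℕ) : ℕ := ∑ i ∈ Finset.range (r + 1), (r - i) * d.choose i

@[simp] lemma percolationBound_zero_right (d : ℕ) : percolationBound d 0 = 0 := by
  simp [percolationBound]

lemma percolationBound_self (d : ℕ) : percolationBound d d = d * 2 ^ (d - 1) := by
  rw [percolationBound, ← Finset.sum_range_reflect, ← Nat.sum_range_mul_choose]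
  refine Finset.sum_congr rfl fun i hi => ?_
  have hi : i ≤ d := Nat.lt_succ_iff.1 (Finset.mem_range.1 hi)
  rw [Nat.add_sub_cancel, Nat.choose_symm hi, Nat.sub_sub_self hi]

lemma percolationBound_succ_succ (d r : ℕ) :
    percolationBound (d + 1) (r + 1) = percolationBound d (r + 1) + percolationBound d r := by
  simp only [percolationBound]
  rw [Finset.sum_range_succ' _ (r + 1), Finset.sum_range_succ' _ (r + 1)]
  have pascal : ∀ i, (r + 1 - (i + 1)) * (d + 1).choose (i + 1) =
      (r - i) * d.choose i + (r + 1 - (i + 1)) * d.choose (i + 1) := fun i => by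
    rw [Nat.choose_succ_succ, Nat.add_sub_add_right, Nat.mul_add]
  simp only [pascal, Finset.sum_add_distrib, Nat.choose_zero_right]
  ring

lemma flipAt_castSucc_snoc (j : Fin d) (x : Fin d → Fin 2) (ε : Fin 2) :
    flipAt j.castSucc (Fin.snoc x ε : Fin (d + 1) → Fin 2) = Fin.snoc (flipAt j x) ε := by
  ext k
  induction k using Fin.lastCases with
  | last => simp [flipAt_apply_of_ne (Fin.castSucc_lt_last j).ne']
  | cast k =>
    rcases eq_or_ne k j with rfl | hk
    · simp
    · rw [flipAt_apply_of_ne (Fin.castSucc_injective d |>.ne hk)]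
      simp [flipAt_apply_of_ne hk]

lemma flipAt_last_snoc (x : Fin d → Fin 2) (ε : Fin 2) :
    flipAt (Fin.last d) (Fin.snoc x ε : Fin (d + 1) → Fin 2) = Fin.snoc x ε.rev := by
  ext k
  induction k using Fin.lastCases with
  | last => simp
  | cast k => simp [flipAt_apply_of_ne (Fin.castSucc_lt_last k).ne]

def snocHom (ε : Fin 2) : hammingGraph 2 d →g hammingGraph 2 (d + 1) where
  toFun x := Fin.snoc x ε
  map_rel' {x y} h := by
    obtain ⟨i, rfl⟩ := adj_iff.1 h
    exact adj_iff.2 ⟨i.castSucc, (flipAt_castSucc_snoc i x ε).symm⟩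

lemma snocHom_apply (ε : Fin 2) (x : Fin d → Fin 2) : snocHom ε x = Fin.snoc x ε := rfl

lemma snocHom_injective (ε : Fin 2) : Function.Injective (snocHom (d := d) ε) :=
  fun x y h => funext fun j => by simpa [snocHom_apply] using congrFun h j.castSucc

lemma map_snocHom_edgeAt (ε : Fin 2) (x : Fin d → Fin 2) (j : Fin d) :
    Sym2.map (snocHom ε) (edgeAt x j) = edgeAt (Fin.snoc x ε) j.castSucc := by
  simp [edgeAt, snocHom_apply, flipAt_castSucc_snoc]

lemma last_eq_of_mem_map_snocHom {ε : Fin 2} {e : Sym2 (Fin d → Fin 2)}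
    {y : Fin (d + 1) → Fin 2} (hy : y ∈ Sym2.map (snocHom ε) e) : y (Fin.last d) = ε := by
  obtain ⟨x, -, rfl⟩ := Sym2.mem_map.1 hy
  simp [snocHom_apply]

def crossEdge (v : Fin d → Fin 2) : Sym2 (Fin (d + 1) → Fin 2) := edgeAt (Fin.snoc v 0) (Fin.last d)

lemma crossEdge_eq (v : Fin d → Fin 2) : crossEdge v = s(Fin.snoc v 0, Fin.snoc v 1) := by
  rw [crossEdge, edgeAt, flipAt_last_snoc]
  rfl

lemma crossEdge_notMem_range_map (ε : Fin 2) (v : Fin d → Fin 2) :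
    crossEdge v ∉ Set.range (Sym2.map (snocHom ε)) := by
  rintro ⟨e, he⟩
  have h₀ : Fin.snoc v 0 ∈ Sym2.map (snocHom ε) e := he ▸ crossEdge_eq v ▸ Sym2.mem_mk_left ..
  have h₁ : Fin.snoc v 1 ∈ Sym2.map (snocHom ε) e := he ▸ crossEdge_eq v ▸ Sym2.mem_mk_right ..
  have := (last_eq_of_mem_map_snocHom h₀).trans (last_eq_of_mem_map_snocHom h₁).symm
  simp at this

lemma edgeSet_succ {e : Sym2 (Fin (d + 1) → Fin 2)} (he : e ∈ (hammingGraph 2 (d + 1)).edgeSet) :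
    (∃ ε, e ∈ Sym2.map (snocHom ε) '' (hammingGraph 2 d).edgeSet) ∨ e ∈ Set.range crossEdge := by
  obtain ⟨⟨x, i⟩, rfl⟩ := edgeSet_eq_range.le he
  rw [← Fin.snoc_init_self x]
  induction i using Fin.lastCases with
  | last =>
    refine .inr ⟨Fin.init x, ?_⟩
    obtain h | h : x (Fin.last d) = 0 ∨ x (Fin.last d) = (0 : Fin 2).rev := by
      generalize x (Fin.last d) = a; revert a; decide
    · rw [h]; rfl
    · rw [h, ← flipAt_last_snoc, Function.uncurry_apply_pair, edgeAt_flipAt]; rfl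
  | cast j =>
    exact .inl ⟨x (Fin.last d), edgeAt (Fin.init x) j, edgeAt_mem_edgeSet _ _,
      map_snocHom_edgeAt _ _ _⟩

lemma range_crossEdge_subset_edgeStep {r : ℕ} (hr : r ≤ d) {B : Set (Sym2 (Fin (d + 1) → Fin 2))}
    (hB : Sym2.map (snocHom 0) '' (hammingGraph 2 d).edgeSet ⊆ B) :
    Set.range crossEdge ⊆ edgeStep (hammingGraph 2 (d + 1)) r B := by
  rintro _ ⟨v, rfl⟩
  refine mem_edgeStep.2 (.inr ⟨edgeAt_mem_edgeSet _ _, _, Sym2.mem_mk_left .., ?_⟩)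
  have hsub : Set.range (edgeAt (Fin.snoc v 0) ∘ Fin.castSucc) ⊆
      (hammingGraph 2 (d + 1)).incidenceSet (Fin.snoc v 0) ∩ B := by
    rintro _ ⟨j, rfl⟩
    refine ⟨(incidenceSet_eq_range _).ge ⟨_, rfl⟩, hB ?_⟩
    exact ⟨edgeAt v j, edgeAt_mem_edgeSet v j, map_snocHom_edgeAt 0 v j⟩
  calc r ≤ d := hr
    _ = (Set.range (edgeAt (Fin.snoc v 0) ∘ Fin.castSucc)).ncard := by
      rw [← Nat.card_coe_set_eq, Nat.card_range_of_injective
        ((edgeAt_injective _).comp (Fin.castSucc_injective d)), Nat.card_fin]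
    _ ≤ _ := Set.ncard_le_ncard hsub (Set.toFinite _)

lemma edgePercolates_union_map_snocHom {r : ℕ} (hr : r + 1 ≤ d)
    {A₀ A₁ : Set (Sym2 (Fin d → Fin 2))} (h₀ : EdgePercolates (hammingGraph 2 d) (r + 1) A₀)
    (h₁ : EdgePercolates (hammingGraph 2 d) r A₁) :
    EdgePercolates (hammingGraph 2 (d + 1)) (r + 1)
      (Sym2.map (snocHom 0) '' A₀ ∪ Sym2.map (snocHom 1) '' A₁) := by
  obtain ⟨hA₀, k₀, hk₀⟩ := h₀
  obtain ⟨hA₁, k₁, hk₁⟩ := h₁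
  set F := edgeStep (hammingGraph 2 (d + 1)) (r + 1)
  set A := Sym2.map (snocHom 0) '' A₀ ∪ Sym2.map (snocHom 1) '' A₁
  have hA : A ⊆ (hammingGraph 2 (d + 1)).edgeSet := by
    rintro _ (⟨e, he, rfl⟩ | ⟨e, he, rfl⟩)
    exacts [(snocHom 0).mapEdgeSet ⟨e, hA₀ he⟩ |>.2, (snocHom 1).mapEdgeSet ⟨e, hA₁ he⟩ |>.2]
  have copy₀ : Sym2.map (snocHom 0) '' (hammingGraph 2 d).edgeSet ⊆ F^[k₀] A := by
    rw [← hk₀, ← Set.union_empty (Sym2.map _ '' _)]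
    refine (image_iterate_edgeStep_subset (c := 0) _ (snocHom_injective 0) (fun _ => Nat.zero_le _)
      A₀ k₀).trans (edgeStep_monotone.iterate k₀ ?_)
    exact Set.union_subset Set.subset_union_left (Set.empty_subset _)
  have cross : Set.range crossEdge ⊆ F^[k₀ + 1] A := by
    rw [Function.iterate_succ_apply']
    exact range_crossEdge_subset_edgeStep hr copy₀
  have copy₁ : Sym2.map (snocHom 1) '' (hammingGraph 2 d).edgeSet ⊆ F^[k₁ + (k₀ + 1)] A := by
    have hM : ∀ v, 1 ≤ (((hammingGraph 2 (d + 1)).incidenceSet (snocHom 1 v) ∩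
        Set.range crossEdge) \ Set.range (Sym2.map (snocHom 1))).ncard := fun v =>
      (Set.ncard_pos (Set.toFinite _)).2 ⟨crossEdge v,
        ⟨⟨edgeAt_mem_edgeSet _ _, crossEdge_eq v ▸ Sym2.mem_mk_right ..⟩, ⟨v, rfl⟩⟩,
        crossEdge_notMem_range_map 1 v⟩
    rw [← hk₁, Function.iterate_add_apply]
    refine Set.subset_union_left.trans <|
      (image_iterate_edgeStep_subset _ (snocHom_injective 1) hM A₁ k₁).trans
        (edgeStep_monotone.iterate k₁ (Set.union_subset ?_ cross))
    exact Set.subset_union_right.trans (monotone_iterate_edgeStep_apply A (Nat.zero_le _))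
  refine (edgePercolates_iff hA).2 ⟨k₁ + (k₀ + 1), fun e he => ?_⟩
  have mono := monotone_iterate_edgeStep_apply (G := hammingGraph 2 (d + 1)) (r := r + 1) A
  rcases edgeSet_succ he with ⟨ε, he⟩ | he
  · fin_cases ε
    · exact mono (by omega) (copy₀ he)
    · exact copy₁ he
  · exact mono (by omega) (cross he)

lemma ncard_union_map_snocHom (A₀ A₁ : Set (Sym2 (Fin d → Fin 2))) :
    (Sym2.map (snocHom 0) '' A₀ ∪ Sym2.map (snocHom 1) '' A₁).ncard = A₀.ncard + A₁.ncard := by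
  have hdisj : Disjoint (Sym2.map (snocHom 0) '' A₀) (Sym2.map (snocHom 1) '' A₁) := by
    refine Set.disjoint_left.2 ?_
    rintro _ ⟨e₀, -, rfl⟩ ⟨e₁, -, he⟩
    obtain ⟨y, hy₀⟩ : ∃ y, y ∈ Sym2.map (snocHom 0) e₀ := ⟨_, Sym2.out_fst_mem _⟩
    have hy₁ := hy₀
    rw [← he] at hy₁
    have := (last_eq_of_mem_map_snocHom hy₀).symm.trans (last_eq_of_mem_map_snocHom hy₁)
    simp at this
  rw [Set.ncard_union_eq hdisj (Set.toFinite _) (Set.toFinite _),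
    Set.ncard_image_of_injective _ (Sym2.map.injective (snocHom_injective 0)),
    Set.ncard_image_of_injective _ (Sym2.map.injective (snocHom_injective 1))]

theorem exists_edgePercolates_ncard_eq (d r : ℕ) (hr : r ≤ d) :
    ∃ A, EdgePercolates (hammingGraph 2 d) r A ∧ A.ncard = percolationBound d r := by
  induction d generalizing r with
  | zero =>
    obtain rfl := Nat.le_zero.1 hr
    exact ⟨∅, edgePercolates_empty_zero, by simp⟩
  | succ d ih =>
    rcases r with _ | r
    · exact ⟨∅, edgePercolates_empty_zero, by simp⟩
    rcases hr.eq_or_lt with hrd | hr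
    · obtain rfl : r = d := by omega
      exact ⟨_, edgePercolates_edgeSet, by rw [ncard_edgeSet, percolationBound_self]⟩
    obtain ⟨A₀, hA₀, hA₀card⟩ := ih (r + 1) (by omega)
    obtain ⟨A₁, hA₁, hA₁card⟩ := ih r (by omega)
    exact ⟨_, edgePercolates_union_map_snocHom (by omega) hA₀ hA₁,
      by rw [ncard_union_map_snocHom, hA₀card, hA₁card, percolationBound_succ_succ]⟩

/-- Every vertex `x` of `Q d` carries a `V`-valued polynomial of degree `< r` with coefficients
`coeff x`, and the two endpoints of the edge in direction `i` agree at the node `i`. -/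
structure PolyLabelling (d r : ℕ) where
  V : Type
  [addCommGroup : AddCommGroup V]
  [module : Module ℚ V]
  coeff : (Fin d → Fin 2) → Fin r → V
  polyEval_flipAt (x : Fin d → Fin 2) (i : Fin d) :
    polyEval ((i : ℕ) : ℚ) (coeff (flipAt i x)) = polyEval ((i : ℕ) : ℚ) (coeff x)

attribute [instance] PolyLabelling.addCommGroup PolyLabelling.module

namespace PolyLabelling

variable {d r : ℕ} (L : PolyLabelling d r)

def label (x : Fin d → Fin 2) (i : Fin d) : L.V := polyEval ((i : ℕ) : ℚ) (L.coeff x)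

noncomputable def rank : ℕ := finrank ℚ (span ℚ (Set.range (Function.uncurry L.label)))

noncomputable def edgeLabel : Sym2 (Fin d → Fin 2) → L.V :=
  Function.extend (Function.uncurry edgeAt) (Function.uncurry L.label) 0

lemma edgeLabel_edgeAt (x : Fin d → Fin 2) (i : Fin d) :
    L.edgeLabel (edgeAt x i) = L.label x i := by
  refine Function.FactorsThrough.extend_apply (f := Function.uncurry edgeAt) ?_ 0 (x, i)
  rintro ⟨x, i⟩ ⟨y, j⟩ h
  simp only [Function.uncurry_apply_pair] at h ⊢
  obtain ⟨rfl, rfl | rfl⟩ := edgeAt_eq_edgeAt_iff.1 h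
  · rfl
  · exact (L.polyEval_flipAt x i).symm

lemma nodes_injective : Function.Injective fun i : Fin d => ((i : ℕ) : ℚ) :=
  Nat.cast_injective.comp Fin.val_injective

/-- Any `r` distinct nodes determine a polynomial of degree `< r`. -/
lemma image_incidenceSet_subset_span (v : Fin d → Fin 2) (S : Set (Sym2 (Fin d → Fin 2)))
    (hS : S ⊆ (hammingGraph 2 d).incidenceSet v) (hr : r ≤ S.ncard) :
    L.edgeLabel '' (hammingGraph 2 d).incidenceSet v ⊆ span ℚ (L.edgeLabel '' S) := by
  rw [incidenceSet_eq_range] at hS ⊢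
  set I := edgeAt v ⁻¹' S
  have hI : r ≤ Nat.card I := by
    rwa [Nat.card_coe_set_eq, ← Set.ncard_image_of_injective _ (edgeAt_injective v),
      Set.image_preimage_eq_of_subset hS]
  let node : Fin r ↪ I := (Fin.castLEEmb hI).trans (Finite.equivFin I).symm.toEmbedding
  have hnode : Function.Injective fun k => (((node k : Fin d) : ℕ) : ℚ) :=
    nodes_injective.comp (Subtype.val_injective.comp node.injective)
  have hspan : Set.range (fun k => polyEval (((node k : Fin d) : ℕ) : ℚ) (L.coeff v)) ⊆
      L.edgeLabel '' S := by
    rintro _ ⟨k, rfl⟩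
    exact ⟨edgeAt v (node k), (node k).2, L.edgeLabel_edgeAt v _⟩
  rintro _ ⟨_, ⟨i, rfl⟩, rfl⟩
  rw [edgeLabel_edgeAt]
  exact span_mono hspan (polyEval_mem_span_polyEval hnode _ _)

theorem rank_le_ncard {A : Set (Sym2 (Fin d → Fin 2))}
    (hA : EdgePercolates (hammingGraph 2 d) r A) : L.rank ≤ A.ncard := by
  have himage :
      L.edgeLabel '' (hammingGraph 2 d).edgeSet = Set.range (Function.uncurry L.label) := by
    rw [edgeSet_eq_range, ← Set.range_comp]
    exact congrArg Set.range (funext fun p => L.edgeLabel_edgeAt p.1 p.2)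
  rw [rank, ← himage]
  exact finrank_span_image_edgeSet_le L.edgeLabel L.image_incidenceSet_subset_span hA

def zero (d : ℕ) : PolyLabelling d 0 where
  V := ℚ
  coeff _ := 0
  polyEval_flipAt _ _ := rfl

/-- Every edge is labelled by its own basis vector: with `r = d` a vertex prescribes its
polynomial at all `d` nodes, so interpolation always succeeds. -/
noncomputable def lagrange (d : ℕ) : PolyLabelling d d where
  V := Sym2 (Fin d → Fin 2) → ℚ
  coeff x := (exists_polyEval_eq nodes_injective fun i => Pi.single (edgeAt x i) 1).choose
  polyEval_flipAt x i := by
    rw [(exists_polyEval_eq nodes_injective _).choose_spec i,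
      (exists_polyEval_eq nodes_injective _).choose_spec i, edgeAt_flipAt]

lemma lagrange_label (x : Fin d → Fin 2) (i : Fin d) :
    (lagrange d).label x i = Pi.single (edgeAt x i) 1 :=
  (exists_polyEval_eq nodes_injective _).choose_spec i

lemma rank_lagrange (d : ℕ) : (lagrange d).rank = (hammingGraph 2 d).edgeSet.ncard := by
  classical
  have hrange : (Set.range (Function.uncurry (lagrange d).label) : Set (Sym2 _ → ℚ)) =
      Set.range fun e : (hammingGraph 2 d).edgeSet => (Pi.single (e : Sym2 _) 1 : _ → ℚ) := by
    rw [Set.range_comp' (fun e => (Pi.single e 1 : _ → ℚ)) Subtype.val, Subtype.range_coe,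
      edgeSet_eq_range, ← Set.range_comp]
    exact congrArg Set.range (funext fun p => lagrange_label p.1 p.2)
  change finrank ℚ (span ℚ (Set.range (Function.uncurry (lagrange d).label) :
    Set (Sym2 _ → ℚ))) = _
  rw [hrange]
  refine (finrank_span_eq_card ((Pi.linearIndependent_single_one _ ℚ).comp _
    Subtype.val_injective)).trans ?_
  rw [← Nat.card_eq_fintype_card, Nat.card_coe_set_eq]

/-- The first component comes from `L₀` on both copies of `Q d`; the second is `(X - d) * L₁` on
the copy with last coordinate `1` and `0` on the other, so both vanish at the node `d` of the
edges between the copies. -/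
def extendCoeff (L₀ : PolyLabelling d (r + 1)) (L₁ : PolyLabelling d r)
    (x : Fin (d + 1) → Fin 2) (t : Fin (r + 1)) : L₀.V × L₁.V :=
  (L₀.coeff (Fin.init x) t,
    ((x (Fin.last d) : ℕ) : ℚ) • mulXSubC (d : ℚ) (L₁.coeff (Fin.init x)) t)

lemma polyEval_extendCoeff (L₀ : PolyLabelling d (r + 1)) (L₁ : PolyLabelling d r)
    (x : Fin d → Fin 2) (ε : Fin 2) (c : ℚ) :
    polyEval c (extendCoeff L₀ L₁ (Fin.snoc x ε)) =
      (polyEval c (L₀.coeff x), ((ε : ℕ) : ℚ) • (c - d) • polyEval c (L₁.coeff x)) := by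
  unfold extendCoeff
  simp only [Fin.init_snoc, Fin.snoc_last]
  rw [polyEval_prodMk, ← Pi.smul_def, map_smul, polyEval_mulXSubC]

-- Reducible, so that instances on `(extend L₀ L₁).V` are seen to be those of `L₀.V × L₁.V`.
abbrev extend (L₀ : PolyLabelling d (r + 1)) (L₁ : PolyLabelling d r) :
    PolyLabelling (d + 1) (r + 1) where
  V := L₀.V × L₁.V
  coeff := extendCoeff L₀ L₁
  polyEval_flipAt x i := by
    obtain ⟨y, ε, rfl⟩ : ∃ y ε, x = Fin.snoc y ε := ⟨_, _, (Fin.snoc_init_self x).symm⟩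
    induction i using Fin.lastCases with
    | last => simp [flipAt_last_snoc, polyEval_extendCoeff]
    | cast j =>
      simp [flipAt_castSucc_snoc, polyEval_extendCoeff, L₀.polyEval_flipAt, L₁.polyEval_flipAt]

lemma rank_add_rank_le_rank_extend (L₀ : PolyLabelling d (r + 1)) (L₁ : PolyLabelling d r) :
    L₀.rank + L₁.rank ≤ (extend L₀ L₁).rank := by
  have hlabel : ∀ x j ε, (extend L₀ L₁).label (Fin.snoc x ε) j.castSucc =
      (L₀.label x j, ((ε : ℕ) : ℚ) • (((j : ℕ) : ℚ) - d) • L₁.label x j) := fun x j ε => by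
    rw [label, Fin.val_castSucc]
    exact polyEval_extendCoeff L₀ L₁ x ε _
  have : FiniteDimensional ℚ (span ℚ (Set.range (Function.uncurry (extend L₀ L₁).label))) :=
    FiniteDimensional.span_of_finite ℚ (Set.finite_range _)
  refine finrank_add_finrank_le_of_prod ?_ ?_
  · rw [Submodule.map_span, ← Set.range_comp]
    refine span_mono ?_
    rintro _ ⟨⟨x, j⟩, rfl⟩
    exact ⟨(Fin.snoc x 0, j.castSucc), by simp [hlabel]⟩
  · refine span_le.2 ?_
    rintro _ ⟨⟨x, j⟩, rfl⟩
    have hj : ((j : ℕ) : ℚ) - d ≠ 0 := sub_ne_zero.2 (by exact_mod_cast j.isLt.ne)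
    refine ⟨((j : ℕ) - d : ℚ)⁻¹ • (extend L₀ L₁).label (Fin.snoc x 1) j.castSucc,
      smul_mem _ _ (subset_span ⟨(Fin.snoc x 1, j.castSucc), rfl⟩), ?_⟩
    simp [hlabel, smul_smul, inv_mul_cancel₀ hj]

theorem exists_percolationBound_le_rank (d r : ℕ) (hr : r ≤ d) :
    ∃ L : PolyLabelling d r, percolationBound d r ≤ L.rank := by
  induction d generalizing r with
  | zero =>
    obtain rfl := Nat.le_zero.1 hr
    exact ⟨zero 0, by simp⟩
  | succ d ih =>
    rcases r with _ | r
    · exact ⟨zero _, by simp⟩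
    rcases hr.eq_or_lt with hrd | hr
    · obtain rfl : r = d := by omega
      exact ⟨lagrange _, by rw [rank_lagrange, ncard_edgeSet, percolationBound_self]⟩
    obtain ⟨L₀, hL₀⟩ := ih (r + 1) (by omega)
    obtain ⟨L₁, hL₁⟩ := ih r (by omega)
    exact ⟨extend L₀ L₁, percolationBound_succ_succ d r ▸
      (add_le_add hL₀ hL₁).trans (rank_add_rank_le_rank_extend L₀ L₁)⟩

end PolyLabelling

end Hypercube

theorem me_hypercube_general (d r : ℕ) (hr : r ≤ d) :
    me (hammingGraph 2 d) r = ∑ i ∈ Finset.range (r + 1), (r - i) * d.choose i := by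
  obtain ⟨A, hA, hAcard⟩ := Hypercube.exists_edgePercolates_ncard_eq d r hr
  obtain ⟨L, hL⟩ := Hypercube.PolyLabelling.exists_percolationBound_le_rank d r hr
  refine le_antisymm (Nat.sInf_le ⟨A, hA, hAcard⟩) (le_csInf ⟨_, A, hA, hAcard⟩ ?_)
  rintro _ ⟨B, hB, rfl⟩
  exact hL.trans (L.rank_le_ncard hB)

/-- For integers `d ≥ 1` and `0 ≤ r ≤ d`, the minimum size of a percolating set in the
`r`-edge bootstrap percolation on the hypercube `Q_d = K_2^d` is
`m_e(K_2^d, r) = ∑_{i=0}^{r} (r − i)·C(d, i)`. -/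
theorem me_hypercube (d r : ℕ) (hd : 1 ≤ d) (hr : r ≤ d) :
    me (hammingGraph 2 d) r = ∑ i ∈ Finset.range (r + 1), (r - i) * d.choose i :=
  me_hypercube_general d r hr
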